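/- Let N ≥ 3 be an odd integer. Let d ∈ [0,1] be an N-adic rational, let k be an odd integer, and let p ≥ 0 be an integer with d + k/N^p ∈ [0,1]. Then there is no f ∈ F(N) with f(d) = d + k/N^p. -/

import Mathlib

/-- A real number is an `N`-adic rational if it equals `k / N^m` for some `k : ℤ`, `m : ℕ`. -/
def IsNAdic (N : ℕ) (x : ℝ) : Prop :=
  ∃ (k : ℤ) (m : ℕ), x = (k : ℝ) / (N : ℝ) ^ m

/-- Membership (as a map of `[0,1]`) in the generalized Thompson group `F(N)`:
`f 0 = 0`, `f 1 = 1`, and there is a finite partition `0 = a 0 < a 1 < ⋯ < a n = 1`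
of `[0,1]` by `N`-adic rationals such that on each piece `[a i, a (i+1)]` the map `f`
is affine with slope an integer power of `N`.  (Such an `f` is automatically an
increasing piecewise-linear homeomorphism of `[0,1]` onto itself, with all
non-differentiability points `N`-adic.) -/
def InFN (N : ℕ) (f : ℝ → ℝ) : Prop :=
  f 0 = 0 ∧ f 1 = 1 ∧
    ∃ (n : ℕ) (a : ℕ → ℝ), 0 < n ∧ a 0 = 0 ∧ a n = 1 ∧
      (∀ i < n, a i < a (i + 1)) ∧
      (∀ i ≤ n, IsNAdic N (a i)) ∧
      (∀ i < n, ∃ q : ℤ, ∀ x ∈ Set.Icc (a i) (a (i + 1)),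
        f x = f (a i) + (N : ℝ) ^ q * (x - a i))

/-!
For `N` odd, `N` is a unit modulo `2`, so the `N`-adic rationals `ℤ[1/N]` have a well-defined
parity, and `N ^ q - 1` is even for every `q : ℤ`. On a piece of `f ∈ F(N)` with slope `N ^ q`
and left endpoint `b`, `f x - x = (f b - b) + (N ^ q - 1) * (x - b)`; starting from `f 0 - 0 = 0`
and walking along the breakpoints, `f x - x` is therefore even for every `N`-adic `x ∈ [0,1]`,
whereas `k / N ^ p` is odd for `k` odd.
-/

open Set

def IsEvenNAdic (N : ℕ) (x : ℝ) : Prop :=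
  ∃ y, IsNAdic N y ∧ x = 2 * y

namespace IsNAdic

variable {N : ℕ} {x y : ℝ}

theorem add (hN : N ≠ 0) (hx : IsNAdic N x) (hy : IsNAdic N y) : IsNAdic N (x + y) := by
  obtain ⟨a, m, rfl⟩ := hx
  obtain ⟨b, r, rfl⟩ := hy
  refine ⟨a * N ^ r + b * N ^ m, m + r, ?_⟩
  field_simp
  push_cast
  ring

theorem neg (hx : IsNAdic N x) : IsNAdic N (-x) := by
  obtain ⟨a, m, rfl⟩ := hx
  exact ⟨-a, m, by push_cast; ring⟩

theorem sub (hN : N ≠ 0) (hx : IsNAdic N x) (hy : IsNAdic N y) : IsNAdic N (x - y) :=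
  sub_eq_add_neg x y ▸ hx.add hN hy.neg

theorem mul (hx : IsNAdic N x) (hy : IsNAdic N y) : IsNAdic N (x * y) := by
  obtain ⟨a, m, rfl⟩ := hx
  obtain ⟨b, r, rfl⟩ := hy
  exact ⟨a * b, m + r, by rw [div_mul_div_comm, pow_add]; push_cast; rfl⟩

end IsNAdic

namespace IsEvenNAdic

variable {N : ℕ} {x y : ℝ}

theorem add (hN : N ≠ 0) (hx : IsEvenNAdic N x) (hy : IsEvenNAdic N y) :
    IsEvenNAdic N (x + y) := by
  obtain ⟨u, hu, rfl⟩ := hx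
  obtain ⟨v, hv, rfl⟩ := hy
  exact ⟨u + v, hu.add hN hv, by ring⟩

theorem mul_isNAdic (hx : IsEvenNAdic N x) (hy : IsNAdic N y) : IsEvenNAdic N (x * y) := by
  obtain ⟨u, hu, rfl⟩ := hx
  exact ⟨u * y, hu.mul hy, by ring⟩

end IsEvenNAdic

theorem isEvenNAdic_zpow_sub_one {N : ℕ} (hN : Odd N) (q : ℤ) :
    IsEvenNAdic N ((N : ℝ) ^ q - 1) := by
  have hN0 : (N : ℝ) ≠ 0 := by exact_mod_cast hN.pos.ne'
  obtain ⟨r, rfl | rfl⟩ := q.eq_nat_or_neg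
  all_goals
    obtain ⟨s, hs⟩ : Odd ((N : ℤ) ^ r) := hN.natCast.pow
    have hNr : (N : ℝ) ^ r = 2 * s + 1 := by exact_mod_cast hs
  · exact ⟨s, ⟨s, 0, by simp⟩, by rw [zpow_natCast, hNr]; ring⟩
  · refine ⟨-s / (N : ℝ) ^ r, ⟨-s, r, by push_cast; rfl⟩, ?_⟩
    rw [zpow_neg, zpow_natCast]
    field_simp
    linarith

theorem not_isEvenNAdic_odd_div_pow {N : ℕ} (hN : Odd N) {k : ℤ} (hk : Odd k) (p : ℕ) :
    ¬ IsEvenNAdic N ((k : ℝ) / (N : ℝ) ^ p) := by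
  rintro ⟨_, ⟨j, m, rfl⟩, h⟩
  have hN0 : (N : ℝ) ≠ 0 := by exact_mod_cast hN.pos.ne'
  have hreal : (k : ℝ) * (N : ℝ) ^ m = 2 * j * (N : ℝ) ^ p := by
    field_simp at h
    linarith
  have hint : k * (N : ℤ) ^ m = 2 * (j * (N : ℤ) ^ p) := by
    rw [← mul_assoc]; exact_mod_cast hreal
  exact Int.not_even_iff_odd.mpr (hk.mul hN.natCast.pow) (hint ▸ even_two_mul _)

theorem isEvenNAdic_sub_self_of_affine {N : ℕ} (hN : Odd N) {f : ℝ → ℝ} {b x : ℝ} {q : ℤ}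
    (hfx : f x = f b + (N : ℝ) ^ q * (x - b)) (hb : IsNAdic N b) (hx : IsNAdic N x)
    (hfb : IsEvenNAdic N (f b - b)) : IsEvenNAdic N (f x - x) := by
  have hN0 : N ≠ 0 := hN.pos.ne'
  have hsplit : f x - x = (f b - b) + ((N : ℝ) ^ q - 1) * (x - b) := by rw [hfx]; ring
  rw [hsplit]
  exact hfb.add hN0 ((isEvenNAdic_zpow_sub_one hN q).mul_isNAdic (hx.sub hN0 hb))

theorem exists_lt_mem_Icc {a : ℕ → ℝ} {x : ℝ} (h0 : a 0 ≤ x) :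
    ∀ {n : ℕ}, 0 < n → x ≤ a n → ∃ i < n, x ∈ Icc (a i) (a (i + 1))
  | 0, hn, _ => absurd hn (lt_irrefl 0)
  | n + 1, _, hxn => by
    by_cases h : 0 < n ∧ x ≤ a n
    · obtain ⟨i, hi, hxi⟩ := exists_lt_mem_Icc h0 h.1 h.2
      exact ⟨i, hi.trans n.lt_succ_self, hxi⟩
    · refine ⟨n, n.lt_succ_self, ?_, hxn⟩
      rcases n.eq_zero_or_pos with rfl | hn
      · exact h0
      · exact (not_le.mp fun hle => h ⟨hn, hle⟩).le

theorem InFN.isEvenNAdic_sub_self {N : ℕ} (hN : Odd N) {f : ℝ → ℝ} (hf : InFN N f)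
    {x : ℝ} (hx : x ∈ Icc (0 : ℝ) 1) (hxN : IsNAdic N x) : IsEvenNAdic N (f x - x) := by
  obtain ⟨hf0, -, n, a, hn, ha0, han, hmono, hadic, hslope⟩ := hf
  have hbreak : ∀ i ≤ n, IsEvenNAdic N (f (a i) - a i) := by
    intro i
    induction i with
    | zero => exact fun _ => ⟨0, ⟨0, 0, by simp⟩, by simp [ha0, hf0]⟩
    | succ i ih =>
      intro (hi : i < n)
      obtain ⟨q, hq⟩ := hslope i hi
      exact isEvenNAdic_sub_self_of_affine hN (hq _ ⟨(hmono i hi).le, le_rfl⟩)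
        (hadic i hi.le) (hadic _ hi) (ih hi.le)
  obtain ⟨i, hi, hxi⟩ := exists_lt_mem_Icc (ha0 ▸ hx.1) hn (han ▸ hx.2)
  obtain ⟨q, hq⟩ := hslope i hi
  exact isEvenNAdic_sub_self_of_affine hN (hq x hxi) (hadic i hi.le) hxN (hbreak i hi.le)

theorem statement6 (N : ℕ) (hNodd : Odd N)
    (d : ℝ) (hd : d ∈ Set.Icc (0 : ℝ) 1) (hdad : IsNAdic N d)
    (k : ℤ) (hk : Odd k) (p : ℕ) :
    ¬ ∃ f : ℝ → ℝ, InFN N f ∧ f d = d + (k : ℝ) / (N : ℝ) ^ p := by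
  rintro ⟨f, hf, hfd⟩
  have heven := hf.isEvenNAdic_sub_self hNodd hd hdad
  rw [hfd, add_sub_cancel_left] at heven
  exact not_isEvenNAdic_odd_div_pow hNodd hk p heven
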